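/- Let $s\in(1/2,1)$ and let $b:(0,\infty)\to(1/2,1)$ be a continuous function with $\lim_{\alpha\to\infty} b(\alpha) = s$. Suppose there exist constants $C\ge 1$ and $L>0$ such that for all $\alpha\in(L,\infty)$ the integral $\int_{\alpha}^{\infty} t^{1/(2b(t)-2)}\,dt$ is finite and positive and $\frac1C \le \frac{s-b(\alpha)}{\int_{\alpha}^{\infty} t^{1/(2b(t)-2)}\,dt} \le C$. Then for every real $x$ with $x < \frac{1}{2-2s} - 1$ one has $\lim_{\alpha\to\infty} (s-b(\alpha))\,\alpha^{x} = 0$. -/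

import Mathlib

/-!
Since `b → s`, the exponent `1 / (2 b t - 2)` tends to `1 / (2 s - 2) < -1`, so for any `p` strictly
between `1 / (2 s - 2)` and `min (-1) (-x - 1)` the integrand is eventually dominated by `t ^ p`.
Hence the integral from `α` is `O(α ^ (p + 1))`, and by the comparison hypothesis so is the gap
`s - b α ≥ 0`; as `p + 1 + x < 0`, the gap times `α ^ x` tends to `0`.
-/

open Filter MeasureTheory Set Real

lemma lintegral_Ioi_rpow_of_lt {p α : ℝ} (hp : p < -1) (hα : 0 < α) :
    ∫⁻ t in Ioi α, ENNReal.ofReal (t ^ p) = ENNReal.ofReal (-α ^ (p + 1) / (p + 1)) := by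
  rw [← ofReal_integral_eq_lintegral_ofReal (integrableOn_Ioi_rpow_of_lt hp hα),
    integral_Ioi_rpow_of_lt hp hα]
  filter_upwards [ae_restrict_mem measurableSet_Ioi] with t ht
  exact rpow_nonneg (hα.trans ht).le p

lemma lintegral_Ioi_rpow_le_of_exponent_le {e : ℝ → ℝ} {p α : ℝ} (hp : p < -1) (hα : 1 ≤ α)
    (he : ∀ t > α, e t ≤ p) :
    ∫⁻ t in Ioi α, ENNReal.ofReal (t ^ e t) ≤ ENNReal.ofReal (-α ^ (p + 1) / (p + 1)) := by
  rw [← lintegral_Ioi_rpow_of_lt hp (by linarith)]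
  refine setLIntegral_mono' measurableSet_Ioi fun t ht => ENNReal.ofReal_le_ofReal ?_
  exact rpow_le_rpow_of_exponent_le (hα.trans (le_of_lt ht)) (he t ht)

lemma nonneg_and_le_mul_of_div_mem_Icc {g I C : ℝ} (hI : 0 < I) (hC : 0 < C)
    (hlo : 1 / C ≤ g / I) (hhi : g / I ≤ C) : 0 ≤ g ∧ g ≤ C * I := by
  have hg : 0 < g / I := lt_of_lt_of_le (by positivity) hlo
  exact ⟨(div_pos_iff_of_pos_right hI).mp hg |>.le, (div_le_iff₀ hI).mp hhi⟩

lemma nonneg_and_le_rpow_of_div_lintegral_mem_Icc {e : ℝ → ℝ} {g C p α : ℝ} (hC : 0 < C)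
    (hp : p < -1) (hα : 1 ≤ α) (he : ∀ t > α, e t ≤ p)
    (hfin : ∫⁻ t in Ioi α, ENNReal.ofReal (t ^ e t) ≠ ⊤)
    (hpos : 0 < ∫⁻ t in Ioi α, ENNReal.ofReal (t ^ e t))
    (hlo : 1 / C ≤ g / (∫⁻ t in Ioi α, ENNReal.ofReal (t ^ e t)).toReal)
    (hhi : g / (∫⁻ t in Ioi α, ENNReal.ofReal (t ^ e t)).toReal ≤ C) :
    0 ≤ g ∧ g ≤ -C / (p + 1) * α ^ (p + 1) := by
  have hbound : 0 ≤ -α ^ (p + 1) / (p + 1) :=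
    div_nonneg_of_nonpos (neg_nonpos.mpr (rpow_pos_of_pos (by linarith) _).le) (by linarith)
  have hI := ENNReal.toReal_le_of_le_ofReal hbound
    (lintegral_Ioi_rpow_le_of_exponent_le hp hα he)
  obtain ⟨hg₀, hg⟩ := nonneg_and_le_mul_of_div_mem_Icc (ENNReal.toReal_pos hpos.ne' hfin) hC hlo hhi
  refine ⟨hg₀, hg.trans ?_⟩
  calc C * _ ≤ C * (-α ^ (p + 1) / (p + 1)) := by gcongr
    _ = -C / (p + 1) * α ^ (p + 1) := by ring

lemma tendsto_mul_rpow_zero_of_le_rpow {g : ℝ → ℝ} {K r x : ℝ}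
    (hg : ∀ᶠ α in atTop, 0 ≤ g α ∧ g α ≤ K * α ^ r) (hrx : r + x < 0) :
    Tendsto (fun α => g α * α ^ x) atTop (nhds 0) := by
  have hK : Tendsto (fun α : ℝ => K * α ^ (r + x)) atTop (nhds 0) := by
    simpa using (tendsto_rpow_neg_atTop (neg_pos.mpr hrx)).const_mul K
  refine squeeze_zero' ?_ ?_ hK <;> filter_upwards [hg, eventually_gt_atTop 0] with α ⟨h0, hle⟩ hα
  · exact mul_nonneg h0 (rpow_nonneg hα.le x)
  · rw [rpow_add hα, ← mul_assoc]
    exact mul_le_mul_of_nonneg_right hle (rpow_nonneg hα.le x)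

theorem spectrum_gap_decay_below_critical_exponent_general (s : ℝ) (hs : s ∈ Ioo (1/2 : ℝ) 1)
    (b : ℝ → ℝ)
    (hbs : Tendsto b atTop (nhds s))
    (C : ℝ) (hC : 1 ≤ C) (L : ℝ)
    (hcomp : ∀ α ∈ Ioi L,
      (∫⁻ t in Ioi α, ENNReal.ofReal (t ^ (1 / (2 * b t - 2)))) ≠ ⊤ ∧
      0 < (∫⁻ t in Ioi α, ENNReal.ofReal (t ^ (1 / (2 * b t - 2)))) ∧
      1 / C ≤ (s - b α) / (∫⁻ t in Ioi α, ENNReal.ofReal (t ^ (1 / (2 * b t - 2)))).toReal ∧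
      (s - b α) / (∫⁻ t in Ioi α, ENNReal.ofReal (t ^ (1 / (2 * b t - 2)))).toReal ≤ C)
    (x : ℝ) (hx : x < 1 / (2 - 2 * s) - 1) :
    Tendsto (fun α : ℝ => (s - b α) * α ^ x) atTop (nhds 0) := by
  obtain ⟨hs₁, hs₂⟩ := hs
  have hq : 1 / (2 * s - 2) < min (-1) (-x - 1) := by
    have h : 1 / (2 * s - 2) = -(1 / (2 - 2 * s)) := by rw [← neg_sub, div_neg]
    refine lt_min ?_ (by linarith)
    rw [h, neg_lt_neg_iff, lt_div_iff₀ (by linarith)]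
    linarith
  obtain ⟨p, hqp, hp⟩ := exists_between hq
  have hp₁ : p < -1 := hp.trans_le (min_le_left _ _)
  have hpx : p + 1 + x < 0 := by linarith [hp.trans_le (min_le_right _ _)]
  have hexp : Tendsto (fun t => 1 / (2 * b t - 2)) atTop (nhds (1 / (2 * s - 2))) :=
    tendsto_const_nhds.div ((hbs.const_mul 2).sub_const 2) (by linarith)
  obtain ⟨M, hM⟩ := eventually_atTop.mp (hexp.eventually (eventually_lt_nhds hqp))
  refine tendsto_mul_rpow_zero_of_le_rpow (K := -C / (p + 1)) (r := p + 1) ?_ hpx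
  filter_upwards [eventually_gt_atTop L, eventually_ge_atTop (max M 1)] with α hαL hα
  obtain ⟨hfin, hpos, hlo, hhi⟩ := hcomp α hαL
  exact nonneg_and_le_rpow_of_div_lintegral_mem_Icc (by linarith) hp₁ (le_of_max_le_right hα)
    (fun t ht => (hM t (by linarith [le_max_left M 1])).le) hfin hpos hlo hhi

theorem spectrum_gap_decay_below_critical_exponent (s : ℝ) (hs : s ∈ Ioo (1/2 : ℝ) 1)
    (b : ℝ → ℝ)
    (hb : ∀ t : ℝ, 0 < t → b t ∈ Ioo (1/2 : ℝ) 1)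
    (hbc : ContinuousOn b (Ioi 0))
    (hbs : Tendsto b atTop (nhds s))
    (C : ℝ) (hC : 1 ≤ C) (L : ℝ) (hL : 0 < L)
    (hcomp : ∀ α ∈ Ioi L,
      (∫⁻ t in Ioi α, ENNReal.ofReal (t ^ (1 / (2 * b t - 2)))) ≠ ⊤ ∧
      0 < (∫⁻ t in Ioi α, ENNReal.ofReal (t ^ (1 / (2 * b t - 2)))) ∧
      1 / C ≤ (s - b α) / (∫⁻ t in Ioi α, ENNReal.ofReal (t ^ (1 / (2 * b t - 2)))).toReal ∧
      (s - b α) / (∫⁻ t in Ioi α, ENNReal.ofReal (t ^ (1 / (2 * b t - 2)))).toReal ≤ C)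
    (x : ℝ) (hx : x < 1 / (2 - 2 * s) - 1) :
    Tendsto (fun α : ℝ => (s - b α) * α ^ x) atTop (nhds 0) :=
  spectrum_gap_decay_below_critical_exponent_general s hs b hbs C hC L hcomp x hx
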